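/- arXiv:1908.01983 — 13 statements merged into one kernel-verified Lean document; each statement's English description precedes it below -/
import Mathlib

section
/- Let S be a cancellative monoid, (F_i)_{i∈I} a right Følner net of S, and E ⊆ S a nonempty finite subset. Then |F_i·E|/|F_i| → 1 along I, and (F_i·E)_{i∈I} is again a right Følner net of S, where F·E = {f·e : f ∈ F, e ∈ E}. -/
open Filter Pointwise

section aux
variable {S : Type*} [CancelMonoid S] [DecidableEq S]

lemma mul_eq_biUnion' (F E : Finset S) :
    F * E = E.biUnion (fun e => F.image (· * e)) := by
  ext x
  simp only [Finset.mem_mul, Finset.mem_biUnion, Finset.mem_image]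
  tauto

lemma card_le_card_mul' (F : Finset S) {E : Finset S} (hE : E.Nonempty) :
    F.card ≤ (F * E).card := by
  obtain ⟨e, he⟩ := hE
  have h1 : F.image (· * e) ⊆ F * E := by
    intro x hx
    obtain ⟨f, hf, rfl⟩ := Finset.mem_image.mp hx
    exact Finset.mul_mem_mul hf he
  calc F.card = (F.image (· * e)).card :=
        (Finset.card_image_of_injective _ (mul_left_injective e)).symm
    _ ≤ _ := Finset.card_le_card h1

lemma card_mul_le_sum' (F E : Finset S) :
    (F * E).card ≤ F.card + ∑ e ∈ E, (F.image (· * e) \ F).card := by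
  have hsub : F * E ⊆ F ∪ E.biUnion (fun e => F.image (· * e) \ F) := by
    rw [mul_eq_biUnion']
    intro x hx
    obtain ⟨e, he, hx⟩ := Finset.mem_biUnion.mp hx
    by_cases h : x ∈ F
    · exact Finset.mem_union_left _ h
    · exact Finset.mem_union_right _
        (Finset.mem_biUnion.mpr ⟨e, he, Finset.mem_sdiff.mpr ⟨hx, h⟩⟩)
  calc (F * E).card ≤ _ := Finset.card_le_card hsub
    _ ≤ F.card + (E.biUnion (fun e => F.image (· * e) \ F)).card :=
        Finset.card_union_le _ _
    _ ≤ _ := by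
        exact Nat.add_le_add_left Finset.card_biUnion_le _

lemma key_bound' (F E : Finset S) (s : S) :
    ((F * E).image (· * s) \ (F * E)).card ≤
      ∑ e ∈ E, ((F.image (· * (e * s)) \ F).card + (F.image (· * e) \ F).card) := by
  have himg : (F * E).image (· * s) = E.biUnion (fun e => F.image (· * (e * s))) := by
    ext x
    simp only [Finset.mem_image, Finset.mem_biUnion, Finset.mem_mul]
    constructor
    · rintro ⟨y, ⟨f, hf, e, he, rfl⟩, rfl⟩
      exact ⟨e, he, f, hf, (mul_assoc f e s).symm⟩
    · rintro ⟨e, he, f, hf, rfl⟩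
      exact ⟨f * e, ⟨f, hf, e, he, rfl⟩, mul_assoc f e s⟩
  have hsub : (F * E).image (· * s) \ (F * E) ⊆
      E.biUnion (fun e => (F.image (· * (e * s)) \ F) ∪ (F \ F.image (· * e))) := by
    intro x hx
    rw [Finset.mem_sdiff, himg] at hx
    obtain ⟨hx1, hx2⟩ := hx
    obtain ⟨e, he, hxe⟩ := Finset.mem_biUnion.mp hx1
    refine Finset.mem_biUnion.mpr ⟨e, he, ?_⟩
    by_cases h : x ∈ F
    · refine Finset.mem_union_right _ (Finset.mem_sdiff.mpr ⟨h, fun hc => hx2 ?_⟩)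
      obtain ⟨f, hf, rfl⟩ := Finset.mem_image.mp hc
      exact Finset.mul_mem_mul hf he
    · exact Finset.mem_union_left _ (Finset.mem_sdiff.mpr ⟨hxe, h⟩)
  calc ((F * E).image (· * s) \ (F * E)).card ≤ _ := Finset.card_le_card hsub
    _ ≤ ∑ e ∈ E, ((F.image (· * (e * s)) \ F) ∪ (F \ F.image (· * e))).card :=
        Finset.card_biUnion_le
    _ ≤ _ := by
        refine Finset.sum_le_sum fun e _ => ?_
        calc _ ≤ (F.image (· * (e * s)) \ F).card + (F \ F.image (· * e)).card :=
              Finset.card_union_le _ _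
          _ = _ := by
              congr 1
              exact Finset.card_sdiff_comm
                (Finset.card_image_of_injective _ (mul_left_injective e)).symm

end aux

/-- If `(F_i)` is a right Følner net of a cancellative monoid `S` and
`E ⊆ S` is a nonempty finite subset, then `|F_i·E|/|F_i| → 1` and `(F_i·E)` is again
a right Følner net of `S`. -/
theorem stmt2 {S : Type*} [CancelMonoid S] [DecidableEq S]
    {I : Type*} [Preorder I] [Nonempty I] [IsDirected I (· ≤ ·)]
    (F : I → Finset S) (hne : ∀ i, (F i).Nonempty)
    (hF : ∀ s : S,
      Tendsto (fun i => ((((F i).image (· * s)) \ F i).card : ℝ) / ((F i).card : ℝ))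
        atTop (nhds 0))
    (E : Finset S) (hE : E.Nonempty) :
    Tendsto (fun i => ((F i * E).card : ℝ) / ((F i).card : ℝ)) atTop (nhds 1) ∧
    (∀ i, (F i * E).Nonempty) ∧
    (∀ s : S,
      Tendsto (fun i => (((F i * E).image (· * s) \ (F i * E)).card : ℝ) / (((F i * E)).card : ℝ))
        atTop (nhds 0)) := by
  have hpos : ∀ i, (0:ℝ) < (F i).card := fun i => by
    exact_mod_cast Finset.card_pos.mpr (hne i)
  have hposE : ∀ i, (0:ℝ) < ((F i * E).card : ℝ) := fun i => by
    have := lt_of_lt_of_le (Finset.card_pos.mpr (hne i)) (card_le_card_mul' (F i) hE)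
    exact_mod_cast this
  refine ⟨?_, fun i => Finset.card_pos.mp (by exact_mod_cast hposE i), ?_⟩
  · -- part 1
    have hlow : ∀ i, (1:ℝ) ≤ ((F i * E).card : ℝ) / ((F i).card : ℝ) := fun i => by
      rw [le_div_iff₀ (hpos i), one_mul]
      exact_mod_cast card_le_card_mul' (F i) hE
    have hupp : ∀ i, ((F i * E).card : ℝ) / ((F i).card : ℝ) ≤
        1 + ∑ e ∈ E, (((F i).image (· * e) \ F i).card : ℝ) / ((F i).card : ℝ) := fun i => by
      rw [div_le_iff₀ (hpos i)]
      have h1 := card_mul_le_sum' (F i) E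
      have h2 : ((F i * E).card : ℝ) ≤
          (F i).card + ∑ e ∈ E, (((F i).image (· * e) \ F i).card : ℝ) := by
        exact_mod_cast h1
      calc ((F i * E).card : ℝ) ≤ _ := h2
        _ = (1 + ∑ e ∈ E, (((F i).image (· * e) \ F i).card : ℝ) / ((F i).card : ℝ)) *
              ((F i).card : ℝ) := by
            rw [add_mul, one_mul, Finset.sum_mul]
            congr 1
            refine Finset.sum_congr rfl fun e _ => ?_
            field_simp
    have hU : Tendsto (fun i => 1 + ∑ e ∈ E,
        (((F i).image (· * e) \ F i).card : ℝ) / ((F i).card : ℝ)) atTop (nhds 1) := by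
      have : Tendsto (fun i => ∑ e ∈ E,
          (((F i).image (· * e) \ F i).card : ℝ) / ((F i).card : ℝ)) atTop (nhds 0) := by
        have := tendsto_finset_sum E (fun e _ => hF e)
        simpa using this
      simpa using tendsto_const_nhds.add this
    exact tendsto_of_tendsto_of_tendsto_of_le_of_le tendsto_const_nhds hU hlow hupp
  · -- part 3
    intro s
    have hnonneg : ∀ i, (0:ℝ) ≤
        (((F i * E).image (· * s) \ (F i * E)).card : ℝ) / ((F i * E).card : ℝ) := fun i =>
      div_nonneg (by positivity) (le_of_lt (hposE i))
    have hupp : ∀ i,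
        (((F i * E).image (· * s) \ (F i * E)).card : ℝ) / ((F i * E).card : ℝ) ≤
        ∑ e ∈ E, ((((F i).image (· * (e * s)) \ F i).card : ℝ) / ((F i).card : ℝ) +
          (((F i).image (· * e) \ F i).card : ℝ) / ((F i).card : ℝ)) := fun i => by
      have h1 : (((F i * E).image (· * s) \ (F i * E)).card : ℝ) / ((F i * E).card : ℝ) ≤
          (((F i * E).image (· * s) \ (F i * E)).card : ℝ) / ((F i).card : ℝ) := by
        apply div_le_div_of_nonneg_left (by positivity) (hpos i)
        exact_mod_cast card_le_card_mul' (F i) hE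
      refine h1.trans ?_
      rw [div_le_iff₀ (hpos i), Finset.sum_mul]
      have h2 : (((F i * E).image (· * s) \ (F i * E)).card : ℝ) ≤
          ∑ e ∈ E, ((((F i).image (· * (e * s)) \ F i).card : ℝ) +
            (((F i).image (· * e) \ F i).card : ℝ)) := by
        exact_mod_cast key_bound' (F i) E s
      refine h2.trans (le_of_eq ?_)
      refine Finset.sum_congr rfl fun e _ => ?_
      rw [add_mul]
      field_simp
    have hU : Tendsto (fun i => ∑ e ∈ E,
        ((((F i).image (· * (e * s)) \ F i).card : ℝ) / ((F i).card : ℝ) +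
          (((F i).image (· * e) \ F i).card : ℝ) / ((F i).card : ℝ))) atTop (nhds 0) := by
      have := tendsto_finset_sum E (fun e _ => (hF (e * s)).add (hF e))
      simpa using this
    exact tendsto_of_tendsto_of_tendsto_of_le_of_le tendsto_const_nhds hU hnonneg hupp
end

section
/- Let G be a group and let S be a submonoid of G that generates G as a group. If S satisfies the right Følner condition, then G satisfies the right Følner condition: for every nonempty finite subset K ⊆ G and every ε > 0 there exists a nonempty finite subset F ⊆ G with |F·g ∖ F| ≤ ε·|F| for every g ∈ K. -/
/-! For a fixed finite `F`, the defect `|F·g ∖ F|` is subadditive in `g` and invariant under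
`g ↦ g⁻¹`. So the defect of an element of the group generated by `S` is at most a sum of
defects of finitely many elements of `S`, uniformly in `F`, and a Følner set of `S` for those
elements, viewed inside `G`, is a Følner set of `G`. -/

def RightFolnerCond (S : Type*) [Mul S] [DecidableEq S] : Prop :=
  ∀ K : Finset S, K.Nonempty → ∀ ε : ℝ, 0 < ε →
    ∃ F : Finset S, F.Nonempty ∧ ∀ k ∈ K, (((F.image (· * k)) \ F).card : ℝ) ≤ ε * F.card

def rightDefect {M : Type*} [Mul M] [DecidableEq M] (F : Finset M) (g : M) : ℕ :=
  ((F.image (· * g)) \ F).card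

section Monoid

variable {M N : Type*} [Monoid M] [DecidableEq M] [Monoid N] [DecidableEq N]

@[simp]
lemma rightDefect_one (F : Finset M) : rightDefect F 1 = 0 := by
  simp [rightDefect]

lemma rightDefect_image_map {f : M →* N} (hf : Function.Injective f) (F : Finset M) (m : M) :
    rightDefect (F.image f) (f m) = rightDefect F m := by
  have hcomm : (F.image f).image (· * f m) = (F.image (· * m)).image f := by
    simp only [Finset.image_image]
    congr 1
    ext x
    simp
  rw [rightDefect, hcomm, ← Finset.image_sdiff _ _ hf, Finset.card_image_of_injective _ hf,
    rightDefect]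

lemma RightFolnerCond.exists_image_of_injective (hM : RightFolnerCond M) {f : M →* N}
    (hf : Function.Injective f) {T : Finset N} (hT : ↑T ⊆ Set.range f) {ε : ℝ} (hε : 0 < ε) :
    ∃ F : Finset N, F.Nonempty ∧ ∀ t ∈ T, (rightDefect F t : ℝ) ≤ ε * F.card := by
  obtain ⟨F, hF, hFK⟩ :=
    hM (insert 1 (T.preimage f hf.injOn)) (Finset.insert_nonempty _ _) ε hε
  refine ⟨F.image f, hF.image f, fun t ht => ?_⟩
  obtain ⟨m, rfl⟩ := hT ht
  rw [rightDefect_image_map hf, Finset.card_image_of_injective _ hf]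
  exact hFK m (Finset.mem_insert_of_mem (Finset.mem_preimage.2 ht))

lemma RightFolnerCond.exists_sum_rightDefect_le (hM : RightFolnerCond M) {f : M →* N}
    (hf : Function.Injective f) {W : Multiset N} (hW : ∀ t ∈ W, t ∈ Set.range f) {ε : ℝ}
    (hε : 0 < ε) :
    ∃ F : Finset N, F.Nonempty ∧ ((W.map (rightDefect F)).sum : ℝ) ≤ ε * F.card := by
  set ε' := ε / (Multiset.card W + 1)
  obtain ⟨F, hF, hFW⟩ := hM.exists_image_of_injective hf (T := W.toFinset)
    (fun t ht => hW t (Multiset.mem_toFinset.1 ht)) (ε := ε') (by positivity)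
  refine ⟨F, hF, ?_⟩
  calc ((W.map (rightDefect F)).sum : ℝ)
      = (W.map fun t => (rightDefect F t : ℝ)).sum := by
        rw [Nat.cast_multiset_sum, Multiset.map_map]
        rfl
    _ ≤ Multiset.card W • (ε' * F.card) := by
        rw [← Multiset.card_map (fun t => (rightDefect F t : ℝ)) W]
        refine Multiset.sum_le_card_nsmul _ _ fun x hx => ?_
        obtain ⟨t, ht, rfl⟩ := Multiset.mem_map.1 hx
        exact hFW t (Multiset.mem_toFinset.2 ht)
    _ ≤ ε * F.card := by
        rw [nsmul_eq_mul, ← mul_assoc]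
        gcongr
        rw [mul_div_assoc', div_le_iff₀ (by positivity)]
        linarith

end Monoid

section Group

variable {G : Type*} [Group G] [DecidableEq G]

lemma image_mul_right_sdiff (F : Finset G) (g h : G) :
    (F.image (· * g) \ F).image (· * h) = F.image (· * (g * h)) \ F.image (· * h) := by
  rw [Finset.image_sdiff _ _ (mul_left_injective h), Finset.image_image]
  simp only [Function.comp_def, mul_assoc]

@[simp]
lemma rightDefect_inv (F : Finset G) (g : G) : rightDefect F g⁻¹ = rightDefect F g := by
  -- `· * g` maps `F·g⁻¹ ∖ F` onto `F ∖ F·g`, which has the size of `F·g ∖ F` as `|F·g| = |F|`.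
  have h : (F.image (· * g⁻¹) \ F).image (· * g) = F \ F.image (· * g) := by
    rw [image_mul_right_sdiff, inv_mul_cancel]
    simp
  rw [rightDefect, ← Finset.card_image_of_injective _ (mul_left_injective g), h, rightDefect,
    Finset.card_sdiff_comm (Finset.card_image_of_injective _ (mul_left_injective g)).symm]

lemma rightDefect_mul_le (F : Finset G) (g h : G) :
    rightDefect F (g * h) ≤ rightDefect F g + rightDefect F h := by
  have hsub : F.image (· * (g * h)) \ F ⊆
      (F.image (· * (g * h)) \ F.image (· * h)) ∪ (F.image (· * h) \ F) := by
    intro x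
    simp only [Finset.mem_sdiff, Finset.mem_union]
    tauto
  calc rightDefect F (g * h)
      ≤ (F.image (· * (g * h)) \ F.image (· * h)).card + rightDefect F h :=
        (Finset.card_le_card hsub).trans (Finset.card_union_le _ _)
    _ = rightDefect F g + rightDefect F h := by
        rw [← image_mul_right_sdiff, Finset.card_image_of_injective _ (mul_left_injective h)]
        rfl

lemma exists_multiset_rightDefect_le_of_mem_closure {s : Set G} {g : G}
    (hg : g ∈ Subgroup.closure s) :
    ∃ W : Multiset G, (∀ t ∈ W, t ∈ s) ∧
      ∀ F : Finset G, rightDefect F g ≤ (W.map (rightDefect F)).sum := by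
  induction hg using Subgroup.closure_induction with
  | mem t ht => exact ⟨{t}, by simpa using ht, by simp⟩
  | one => exact ⟨0, by simp, by simp⟩
  | mul a b _ _ iha ihb =>
    obtain ⟨Wa, hWa, ha⟩ := iha
    obtain ⟨Wb, hWb, hb⟩ := ihb
    refine ⟨Wa + Wb, fun t ht => (Multiset.mem_add.1 ht).elim (hWa t) (hWb t), fun F => ?_⟩
    rw [Multiset.map_add, Multiset.sum_add]
    exact (rightDefect_mul_le F a b).trans (add_le_add (ha F) (hb F))
  | inv a _ ih => simpa only [rightDefect_inv] using ih

lemma exists_multiset_rightDefect_le_of_subset_closure {s : Set G} {K : Finset G}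
    (hK : ↑K ⊆ (Subgroup.closure s : Set G)) :
    ∃ W : Multiset G, (∀ t ∈ W, t ∈ s) ∧
      ∀ F : Finset G, ∀ k ∈ K, rightDefect F k ≤ (W.map (rightDefect F)).sum := by
  induction K using Finset.induction_on with
  | empty => exact ⟨0, by simp, by simp⟩
  | insert k K _ ih =>
    obtain ⟨Wk, hWk, hkW⟩ :=
      exists_multiset_rightDefect_le_of_mem_closure (hK (Finset.mem_insert_self k K))
    obtain ⟨WK, hWK, hKW⟩ := ih ((Finset.coe_subset.2 (Finset.subset_insert k K)).trans hK)
    refine ⟨Wk + WK, fun t ht => (Multiset.mem_add.1 ht).elim (hWk t) (hWK t), fun F l hl => ?_⟩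
    rw [Multiset.map_add, Multiset.sum_add]
    rcases Finset.mem_insert.1 hl with rfl | hl
    · exact (hkW F).trans (Nat.le_add_right _ _)
    · exact (hKW F l hl).trans (Nat.le_add_left _ _)

end Group

/-- if a submonoid `S` generating a group `G` satisfies the right
Følner condition, then so does `G`. -/
theorem stmt4 {G : Type*} [Group G] [DecidableEq G] (S : Submonoid G)
    (hgen : Subgroup.closure (S : Set G) = ⊤)
    (hS : RightFolnerCond ↥S) :
    RightFolnerCond G := by
  intro K _ ε hε
  obtain ⟨W, hWS, hKW⟩ :=
    exists_multiset_rightDefect_le_of_subset_closure (s := S) (K := K) (by simp [hgen])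
  obtain ⟨F, hF, hFW⟩ :=
    hS.exists_sum_rightDefect_le S.subtype_injective (W := W) (by simpa using hWS) hε
  exact ⟨F, hF, fun k hk => (Nat.cast_le.2 (hKW F k hk)).trans hFW⟩
end

section
/- Let G be a group and let S be a submonoid of G that generates G as a group. If (F_i)_{i∈I} is a right Følner net of S, then (F_i)_{i∈I}, viewed as a net of finite subsets of G, is a right Følner net of G; that is, for every g ∈ G the ratio |F_i·g Δ F_i|/|F_i| tends to 0 along I. -/
/-!
For a family of finite sets `A i` in a group, the right translations `g` along which
`|A i · g ∆ A i| / |A i| → 0` form a subgroup: the defect of `g h` is at most the defect of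
`g` plus that of `h` (translate `A · g ∆ A` by `h` and use the triangle inequality for `∆`),
and `g⁻¹` has the same defect as `g`. Inside a group right translation is injective, so
`|A · s ∆ A| = 2 |A · s \ A|`, and the Følner condition on `S` puts `S` into this subgroup.
Since `S` generates `G`, the subgroup is all of `G`.
-/

open Filter Topology Finset
open scoped symmDiff

namespace Finset

variable {G : Type*} [DecidableEq G]

lemma card_symmDiff_image_mul_right [Mul G] [IsRightCancelMul G] (A : Finset G) (g : G) :
    #(A.image (· * g) ∆ A) = 2 * #(A.image (· * g) \ A) := by
  have hcomm : #(A \ A.image (· * g)) = #(A.image (· * g) \ A) :=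
    card_sdiff_comm (card_image_of_injective _ (mul_left_injective g)).symm
  rw [symmDiff_def, sup_eq_union, card_union_of_disjoint disjoint_sdiff_sdiff, hcomm, two_mul]

variable [Group G]

lemma image_mul_right_image_mul_right (A : Finset G) (g h : G) :
    (A.image (· * g)).image (· * h) = A.image (· * (g * h)) := by
  simp only [image_image, Function.comp_def, mul_assoc]

lemma card_symmDiff_image_mul_right_mul_image_mul_right (A : Finset G) (g h : G) :
    #(A.image (· * (g * h)) ∆ A.image (· * h)) = #(A.image (· * g) ∆ A) := by
  rw [← image_mul_right_image_mul_right, ← image_symmDiff _ _ (mul_left_injective h),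
    card_image_of_injective _ (mul_left_injective h)]

lemma card_symmDiff_image_mul_right_inv (A : Finset G) (g : G) :
    #(A.image (· * g⁻¹) ∆ A) = #(A.image (· * g) ∆ A) := by
  rw [← card_symmDiff_image_mul_right_mul_image_mul_right A g⁻¹ g, inv_mul_cancel]
  simp only [mul_one, image_id', symmDiff_comm]

lemma card_symmDiff_image_mul_right_mul_le (A : Finset G) (g h : G) :
    #(A.image (· * (g * h)) ∆ A) ≤ #(A.image (· * g) ∆ A) + #(A.image (· * h) ∆ A) := by
  rw [← card_symmDiff_image_mul_right_mul_image_mul_right A g h]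
  exact (card_le_card (symmDiff_triangle _ _ _)).trans (card_union_le _ _)

end Finset

section RightFolnerSubgroup

variable {G I : Type*} [Group G] [DecidableEq G]

def rightFolnerSubgroup (l : Filter I) (A : I → Finset G) : Subgroup G where
  carrier := {g | Tendsto (fun i => (#((A i).image (· * g) ∆ A i) : ℝ) / #(A i)) l (𝓝 0)}
  one_mem' := by simp only [Set.mem_ofPred_eq, mul_one, image_id', symmDiff_self, bot_eq_empty,
    card_empty, Nat.cast_zero, zero_div, tendsto_const_nhds]
  mul_mem' {g h} hg hh := by
    have hsum := hg.add hh
    rw [add_zero] at hsum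
    refine squeeze_zero (fun i => by positivity) (fun i => ?_) hsum
    rw [← add_div]
    gcongr
    exact_mod_cast card_symmDiff_image_mul_right_mul_le (A i) g h
  inv_mem' {g} hg := by simpa only [Set.mem_ofPred_eq, card_symmDiff_image_mul_right_inv]

lemma mem_rightFolnerSubgroup {l : Filter I} {A : I → Finset G} {g : G} :
    g ∈ rightFolnerSubgroup l A ↔
      Tendsto (fun i => (#((A i).image (· * g) ∆ A i) : ℝ) / #(A i)) l (𝓝 0) :=
  Iff.rfl

end RightFolnerSubgroup

lemma Submonoid.card_symmDiff_image_val_mul_right {G : Type*} [Group G] [DecidableEq G]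
    {S : Submonoid G} (F : Finset S) (s : S) :
    #((F.image (↑)).image (· * (s : G)) ∆ F.image ((↑) : S → G)) =
      2 * #(F.image (· * s) \ F) := by
  rw [card_symmDiff_image_mul_right, image_image,
    ← card_image_of_injective _ Subtype.val_injective, image_sdiff _ _ Subtype.val_injective,
    image_image]
  rfl

theorem stmt5_general {G : Type*} [Group G] [DecidableEq G] (S : Submonoid G)
    (hgen : Subgroup.closure (S : Set G) = ⊤)
    {I : Type*} [Preorder I]
    (F : I → Finset ↥S)
    (hF : ∀ s : ↥S,
      Tendsto (fun i => ((((F i).image (· * s)) \ F i).card : ℝ) / ((F i).card : ℝ))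
        atTop (nhds 0)) :
    ∀ g : G,
      Tendsto (fun i =>
          ((symmDiff (((F i).image (fun x : ↥S => (x : G))).image (· * g))
              ((F i).image (fun x : ↥S => (x : G)))).card : ℝ) /
            ((((F i).image (fun x : ↥S => (x : G)))).card : ℝ))
        atTop (nhds 0) := by
  have hS : ∀ s : S, (s : G) ∈ rightFolnerSubgroup atTop fun i => (F i).image (↑) := fun s => by
    have h2 := (hF s).const_mul 2
    rw [mul_zero] at h2
    refine mem_rightFolnerSubgroup.2 (h2.congr fun i => ?_)
    rw [Submonoid.card_symmDiff_image_val_mul_right,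
      card_image_of_injective _ Subtype.val_injective]
    push_cast
    ring
  have htop : rightFolnerSubgroup atTop (fun i => (F i).image ((↑) : S → G)) = ⊤ :=
    top_unique (hgen ▸ (Subgroup.closure_le _).2 fun s hs => hS ⟨s, hs⟩)
  exact fun g => mem_rightFolnerSubgroup.1 (htop ▸ Subgroup.mem_top g)

/-- a right Følner net of a submonoid `S` generating the group `G`,
viewed inside `G`, is a right Følner net of `G` (symmetric-difference form). -/
theorem stmt5 {G : Type*} [Group G] [DecidableEq G] (S : Submonoid G)
    (hgen : Subgroup.closure (S : Set G) = ⊤)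
    {I : Type*} [Preorder I] [Nonempty I] [IsDirected I (· ≤ ·)]
    (F : I → Finset ↥S) (hne : ∀ i, (F i).Nonempty)
    (hF : ∀ s : ↥S,
      Tendsto (fun i => ((((F i).image (· * s)) \ F i).card : ℝ) / ((F i).card : ℝ))
        atTop (nhds 0)) :
    ∀ g : G,
      Tendsto (fun i =>
          ((symmDiff (((F i).image (fun x : ↥S => (x : G))).image (· * g))
              ((F i).image (fun x : ↥S => (x : G)))).card : ℝ) /
            ((((F i).image (fun x : ↥S => (x : G)))).card : ℝ))
        atTop (nhds 0) :=
  stmt5_general S hgen F hF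
end

section
/- Let S be a cancellative monoid, C a monoid, π : S → C a surjective monoid homomorphism, and N = π⁻¹(1), a submonoid of S. Suppose s ∈ S is semi-good, i.e., N·s = s·N as subsets of S (where N·s = {n·s : n ∈ N} and s·N = {s·n : n ∈ N}). Then for every n ∈ N there exists a unique element h_s(n) ∈ N such that n·s = s·h_s(n), and the resulting map h_s : N → N is an automorphism of the monoid N (a bijective map satisfying h_s(n·n') = h_s(n)·h_s(n') for all n, n' ∈ N). -/
/-- for a semi-good element `s` (i.e. `N·s = s·N` where `N = π⁻¹(1)`),
the map `h_s : N → N` determined by `n·s = s·h_s(n)` is well defined (unique values)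
and is an automorphism of the monoid `N`. -/
theorem stmt8 {S C : Type*} [CancelMonoid S] [Monoid C]
    (π : S →* C) (hsurj : Function.Surjective π) (s : S)
    (hsg : (fun n : S => n * s) '' (MonoidHom.mker π : Set S)
        = (fun n : S => s * n) '' (MonoidHom.mker π : Set S)) :
    ∃ h : ↥(MonoidHom.mker π) → ↥(MonoidHom.mker π),
      (∀ n : ↥(MonoidHom.mker π), (n : S) * s = s * ((h n : S))) ∧
      (∀ n m : ↥(MonoidHom.mker π), (n : S) * s = s * (m : S) → m = h n) ∧
      Function.Bijective h ∧
      (∀ n m : ↥(MonoidHom.mker π), h (n * m) = h n * h m) := by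
  set N := MonoidHom.mker π
  have ex : ∀ n : ↥N, ∃ m : ↥N, (n : S) * s = s * (m : S) := by
    intro n
    have : (n : S) * s ∈ (fun n : S => s * n) '' (N : Set S) := by
      rw [← hsg]; exact ⟨n, n.2, rfl⟩
    obtain ⟨m, hm, hms⟩ := this
    exact ⟨⟨m, hm⟩, hms.symm⟩
  choose h hh using ex
  have uniq : ∀ n m : ↥N, (n : S) * s = s * (m : S) → m = h n := by
    intro n m hnm
    have : (m : S) = (h n : S) := mul_left_cancel (hnm.symm.trans (hh n))
    exact Subtype.ext this
  refine ⟨h, hh, uniq, ⟨?_, ?_⟩, ?_⟩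
  · intro a b hab
    have : (a : S) * s = (b : S) * s := by rw [hh a, hh b, hab]
    exact Subtype.ext (mul_right_cancel this)
  · intro m
    have : s * (m : S) ∈ (fun n : S => n * s) '' (N : Set S) := by
      rw [hsg]; exact ⟨m, m.2, rfl⟩
    obtain ⟨n, hn, hns⟩ := this
    exact ⟨⟨n, hn⟩, (uniq ⟨n, hn⟩ m hns).symm⟩
  · intro n m
    refine (uniq (n * m) (h n * h m) ?_).symm
    push_cast
    rw [mul_assoc, hh m, ← mul_assoc, hh n, mul_assoc]
end

section
/- Let S be a cancellative monoid, C a monoid, and π : S → C a surjective monoid homomorphism with N = π⁻¹(1), and suppose π admits a good section σ. Then every section for π is good if and only if N is a group, i.e., every element of N has a two-sided inverse in N. -/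
/-- A section `σ` for a surjective monoid homomorphism `π` is good if
`π⁻¹(c) = N·σ(c) = σ(c)·N` for every `c`, where `N = π⁻¹(1)`. -/
def IsGoodSection {S C : Type*} [Monoid S] [Monoid C] (π : S →* C) (σ : C → S) : Prop :=
  (∀ c : C, π (σ c) = c) ∧
  ∀ c : C,
    (fun n : S => n * σ c) '' (MonoidHom.mker π : Set S) = π ⁻¹' {c} ∧
    (fun n : S => σ c * n) '' (MonoidHom.mker π : Set S) = π ⁻¹' {c}

/-- if `π` admits a good section, then every section for `π` is good
iff `N = π⁻¹(1)` is a group. -/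
theorem stmt9 {S C : Type*} [CancelMonoid S] [Monoid C]
    (π : S →* C) (hsurj : Function.Surjective π)
    (σ : C → S) (hσ : IsGoodSection π σ) :
    ((∀ σ' : C → S, (∀ c, π (σ' c) = c) → IsGoodSection π σ') ↔
      (∀ n ∈ MonoidHom.mker π, ∃ m ∈ MonoidHom.mker π, n * m = 1 ∧ m * n = 1)) := by
  classical
  obtain ⟨hσ1, hσ2⟩ := hσ
  constructor
  · intro h n hn
    set σ' : C → S := fun c => if c = 1 then n else σ c with hσ'def
    have hsec : ∀ c, π (σ' c) = c := by
      intro c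
      by_cases hc : c = 1
      · simp [σ', hc, MonoidHom.mem_mker.mp hn]
      · simp [σ', hc, hσ1 c]
    obtain ⟨-, hg⟩ := h σ' hsec
    obtain ⟨hl, hr⟩ := hg 1
    have h1 : (1 : S) ∈ π ⁻¹' {(1 : C)} := by simp
    have h1' := h1
    rw [← hl] at h1
    rw [← hr] at h1'
    obtain ⟨m, hm, hm1⟩ := h1
    obtain ⟨m', hm', hm1'⟩ := h1'
    simp only [σ', if_pos rfl] at hm1 hm1'
    -- hm1 : m * n = 1, hm1' : n * m' = 1
    have hmm : m = m' := by
      calc m = m * (n * m') := by rw [hm1', mul_one]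
      _ = (m * n) * m' := by rw [mul_assoc]
      _ = m' := by rw [hm1, one_mul]
    exact ⟨m, hm, by rw [hmm]; exact hm1', hm1⟩
  · intro hN σ' hsec'
    refine ⟨hsec', fun c => ?_⟩
    obtain ⟨hlσ, hrσ⟩ := hσ2 c
    have hσ'c : σ' c ∈ π ⁻¹' {c} := by simp [hsec' c]
    constructor
    · ext s
      constructor
      · rintro ⟨m, hm, rfl⟩
        simp [map_mul, MonoidHom.mem_mker.mp hm, hsec' c]
      · intro hs
        rw [← hlσ] at hs
        have hσ'c' := hσ'c
        rw [← hlσ] at hσ'c'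
        obtain ⟨n₀, hn₀, hn₀e⟩ := hs
        obtain ⟨n₁, hn₁, hn₁e⟩ := hσ'c'
        obtain ⟨m₁, hm₁, hm₁1, hm₁2⟩ := hN n₁ hn₁
        refine ⟨n₀ * m₁, mul_mem hn₀ hm₁, ?_⟩
        simp only at hn₀e hn₁e ⊢
        rw [← hn₁e, ← hn₀e, mul_assoc, ← mul_assoc m₁, hm₁2, one_mul]
    · ext s
      constructor
      · rintro ⟨m, hm, rfl⟩
        simp [map_mul, MonoidHom.mem_mker.mp hm, hsec' c]
      · intro hs
        rw [← hrσ] at hs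
        have hσ'c' := hσ'c
        rw [← hrσ] at hσ'c'
        obtain ⟨n₀, hn₀, hn₀e⟩ := hs
        obtain ⟨n₁, hn₁, hn₁e⟩ := hσ'c'
        obtain ⟨m₁, hm₁, hm₁1, hm₁2⟩ := hN n₁ hn₁
        refine ⟨m₁ * n₀, mul_mem hm₁ hn₀, ?_⟩
        simp only at hn₀e hn₁e ⊢
        rw [← hn₁e, ← hn₀e, mul_assoc, ← mul_assoc n₁, hm₁1, one_mul]
end

section
/- Let S be a cancellative monoid, C a monoid, and π : S → C a surjective monoid homomorphism with N = π⁻¹(1), admitting a good section σ. Then: (a) for all x, y ∈ C, σ(x)·σ(y)·N ⊆ σ(x·y)·N = π⁻¹(x·y) (as subsets of S); (b) the map f : N × C → S defined by f(n,c) = n·σ(c) is a bijection. -/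
/-- for a good section `σ`, (a) `σ(x)·σ(y)·N ⊆ σ(xy)·N = π⁻¹(xy)`, and
(b) the map `N × C → S`, `(n,c) ↦ n·σ(c)` is a bijection. -/
theorem stmt10 {S C : Type*} [CancelMonoid S] [Monoid C]
    (π : S →* C) (hsurj : Function.Surjective π)
    (σ : C → S) (hσ : IsGoodSection π σ) :
    (∀ x y : C,
      (fun n : S => σ x * σ y * n) '' (MonoidHom.mker π : Set S)
          ⊆ (fun n : S => σ (x * y) * n) '' (MonoidHom.mker π : Set S) ∧
      (fun n : S => σ (x * y) * n) '' (MonoidHom.mker π : Set S) = π ⁻¹' {x * y}) ∧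
    Function.Bijective (fun p : ↥(MonoidHom.mker π) × C => (p.1 : S) * σ p.2) := by
  obtain ⟨hsec, hgood⟩ := hσ
  constructor
  · intro x y
    have heq := (hgood (x * y)).2
    refine ⟨?_, heq⟩
    rw [heq]
    rintro s ⟨n, hn, rfl⟩
    have hn1 : π n = 1 := hn
    simp [Set.mem_preimage, map_mul, hsec, hn1]
  · constructor
    · rintro ⟨n₁, c₁⟩ ⟨n₂, c₂⟩ h
      simp only at h
      have hc : c₁ = c₂ := by
        have := congrArg π h
        have h1 : π n₁ = 1 := n₁.2
        have h2 : π n₂ = 1 := n₂.2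
        simpa [map_mul, hsec, h1, h2] using this
      subst hc
      have hn : (n₁ : S) = n₂ := mul_right_cancel h
      simp [Prod.ext_iff, Subtype.ext_iff, hn]
    · intro s
      have : s ∈ π ⁻¹' {π s} := rfl
      rw [← (hgood (π s)).1] at this
      obtain ⟨n, hn, hns⟩ := this
      exact ⟨(⟨n, hn⟩, π s), hns⟩
end

section
/- Let S be a cancellative monoid, C a monoid, π : S → C a surjective monoid homomorphism admitting a good section σ, and N = π⁻¹(1). Assume N satisfies the left Ore condition (as holds when N is right amenable). Then for every nonempty finite subset C̄ ⊆ C and every y ∈ C there exist a nonempty finite subset Z ⊆ N and an element u ∈ N such that u·σ(y·C̄) ⊆ Z·σ(y)·σ(C̄); explicitly, for every c ∈ C̄ there exists z ∈ Z with u·σ(y·c) = z·σ(y)·σ(c). -/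
/-- Common left multiple for finitely many elements under the left Ore condition. -/
lemma ore_common {M : Type*} [Monoid M]
    (hOre : ∀ a b : M, ∃ f g : M, f * a = g * b) {ι : Type*} (F : Finset ι) (m : ι → M) :
    ∃ u : M, ∀ c ∈ F, ∃ z : M, z * m c = u := by
  classical
  induction F using Finset.induction with
  | empty => exact ⟨1, fun c hc => absurd hc (Finset.notMem_empty c)⟩
  | @insert a s hns ih =>
    obtain ⟨u, hu⟩ := ih
    obtain ⟨f, g, hfg⟩ := hOre u (m a)
    refine ⟨f * u, fun c hcm => ?_⟩
    rcases Finset.mem_insert.1 hcm with rfl | hcs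
    · exact ⟨g, by rw [hfg]⟩
    · obtain ⟨z, hz⟩ := hu c hcs
      exact ⟨f * z, by rw [mul_assoc, hz]⟩

/-- if `N = π⁻¹(1)` satisfies the left Ore condition, then for every
nonempty finite `C̄ ⊆ C` and every `y ∈ C` there exist a nonempty finite `Z ⊆ N` and
`u ∈ N` with `u·σ(y·c) = z·σ(y)·σ(c)` for some `z ∈ Z`, for each `c ∈ C̄`. -/
theorem stmt11 {S C : Type*} [CancelMonoid S] [Monoid C]
    (π : S →* C) (hsurj : Function.Surjective π)
    (σ : C → S) (hσ : IsGoodSection π σ)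
    (hOre : ∀ a b : ↥(MonoidHom.mker π), ∃ f g : ↥(MonoidHom.mker π), f * a = g * b)
    (Cbar : Finset C) (hCbar : Cbar.Nonempty) (y : C) :
    ∃ (Z : Finset ↥(MonoidHom.mker π)) (u : ↥(MonoidHom.mker π)), Z.Nonempty ∧
      ∀ c ∈ Cbar, ∃ z ∈ Z, (u : S) * σ (y * c) = (z : S) * σ y * σ c := by
  classical
  obtain ⟨hsec, hgood⟩ := hσ
  -- For each c, σ y * σ c = m c * σ (y*c) with m c ∈ N
  have hm : ∀ c : C, ∃ m : ↥(MonoidHom.mker π), (m : S) * σ (y * c) = σ y * σ c := by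
    intro c
    have hmem : σ y * σ c ∈ π ⁻¹' {y * c} := by
      simp [Set.mem_preimage, map_mul, hsec]
    rw [← (hgood (y * c)).1] at hmem
    obtain ⟨n, hn, heq⟩ := hmem
    exact ⟨⟨n, hn⟩, heq⟩
  set m : C → ↥(MonoidHom.mker π) := fun c => (hm c).choose with hmdef
  obtain ⟨u, hu⟩ := ore_common hOre Cbar m
  have hz : ∀ c ∈ Cbar, ∃ z : ↥(MonoidHom.mker π), z * m c = u := hu
  refine ⟨Cbar.attach.image (fun c => (hz c.1 c.2).choose), u,
    ⟨(hz hCbar.choose hCbar.choose_spec).choose, Finset.mem_image.2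
      ⟨⟨hCbar.choose, hCbar.choose_spec⟩, Finset.mem_attach _ _, rfl⟩⟩, ?_⟩
  intro c hc
  refine ⟨(hz c hc).choose, Finset.mem_image.2 ⟨⟨c, hc⟩, Finset.mem_attach _ _, rfl⟩, ?_⟩
  have h1 : ((hz c hc).choose : ↥(MonoidHom.mker π)) * m c = u := (hz c hc).choose_spec
  have h2 : (m c : S) * σ (y * c) = σ y * σ c := (hm c).choose_spec
  have h1' : ((hz c hc).choose : S) * (m c : S) = (u : S) := by
    exact_mod_cast congrArg Subtype.val h1
  calc (u : S) * σ (y * c) = ((hz c hc).choose : S) * (m c : S) * σ (y * c) := by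
        rw [h1']
    _ = ((hz c hc).choose : S) * σ y * σ c := by rw [mul_assoc, h2, ← mul_assoc]
end

section
/- Let S be a cancellative monoid, C a monoid, π : S → C a surjective monoid homomorphism, and N = π⁻¹(1). Suppose there exists a right invariant finitely additive probability measure μ on S, i.e., μ : P(S) → [0,1] with μ(S) = 1, μ(X ∪ Y) = μ(X) + μ(Y) whenever X, Y ⊆ S are disjoint, and μ(X·s) = μ(X) for all s ∈ S and X ⊆ S (since S is cancellative this is equivalent to μ({x ∈ S : x·s ∈ X}) = μ(X)). Then: (a) C admits a finitely additive probability measure λ with λ({c ∈ C : c·d ∈ Y}) = λ(Y) for all d ∈ C and Y ⊆ C (so C is right amenable); (b) if moreover π admits a good section σ, then N admits a finitely additive probability measure ν with ν(X·n) = ν(X) for all n ∈ N and X ⊆ N (so N is right amenable). -/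
/-- if the cancellative monoid `S` carries a right invariant finitely
additive probability measure, then (a) `C` carries one (in preimage form), and
(b) if `π` admits a good section, then `N = π⁻¹(1)` carries one as well. -/
theorem stmt12 {S C : Type*} [CancelMonoid S] [Monoid C]
    (π : S →* C) (hsurj : Function.Surjective π)
    (μ : Set S → ℝ)
    (hrange : ∀ X : Set S, 0 ≤ μ X ∧ μ X ≤ 1)
    (huniv : μ Set.univ = 1)
    (hadd : ∀ X Y : Set S, Disjoint X Y → μ (X ∪ Y) = μ X + μ Y)
    (hinv : ∀ (s : S) (X : Set S), μ ((fun x => x * s) '' X) = μ X) :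
    (∃ lam : Set C → ℝ,
      (∀ Y : Set C, 0 ≤ lam Y ∧ lam Y ≤ 1) ∧
      lam Set.univ = 1 ∧
      (∀ Y Z : Set C, Disjoint Y Z → lam (Y ∪ Z) = lam Y + lam Z) ∧
      (∀ (d : C) (Y : Set C), lam {c : C | c * d ∈ Y} = lam Y)) ∧
    ((∃ σ : C → S, IsGoodSection π σ) →
      ∃ ν : Set ↥(MonoidHom.mker π) → ℝ,
        (∀ X, 0 ≤ ν X ∧ ν X ≤ 1) ∧
        ν Set.univ = 1 ∧
        (∀ X Y, Disjoint X Y → ν (X ∪ Y) = ν X + ν Y) ∧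
        (∀ (n : ↥(MonoidHom.mker π)) (X : Set ↥(MonoidHom.mker π)),
          ν ((fun x => x * n) '' X) = ν X)) := by
  -- monotonicity of μ
  have hmono : ∀ X Y : Set S, X ⊆ Y → μ X ≤ μ Y := by
    intro X Y h
    have e : μ Y = μ X + μ (Y \ X) := by
      conv_lhs => rw [← Set.union_diff_cancel h]
      exact hadd _ _ disjoint_sdiff_self_right
    linarith [(hrange (Y \ X)).1]
  -- translation preimage invariance
  have hkey : ∀ (s : S) (X : Set S), μ ((fun x => x * s) ⁻¹' X) = μ X := by
    intro s X
    have hr : μ (Set.range (fun x : S => x * s)) = 1 := by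
      rw [← Set.image_univ, hinv, huniv]
    have hcompl : μ ((Set.range (fun x : S => x * s))ᶜ) = 0 := by
      have e : μ (Set.univ : Set S)
          = μ (Set.range (fun x : S => x * s)) + μ ((Set.range (fun x : S => x * s))ᶜ) := by
        rw [← hadd _ _ disjoint_compl_right, Set.union_compl_self]
      rw [huniv, hr] at e; linarith
    have hdiff : μ (X \ Set.range (fun x : S => x * s)) = 0 := by
      have h1 := hmono _ _ (Set.diff_subset_compl X (Set.range (fun x : S => x * s)))
      have h2 := (hrange (X \ Set.range (fun x : S => x * s))).1
      linarith [h1.trans_eq hcompl]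
    have himg : (fun x : S => x * s) '' ((fun x : S => x * s) ⁻¹' X)
        = X ∩ Set.range (fun x : S => x * s) := Set.image_preimage_eq_inter_range
    have e2 : μ X = μ (X ∩ Set.range (fun x : S => x * s))
        + μ (X \ Set.range (fun x : S => x * s)) := by
      have hdis : Disjoint (X ∩ Set.range (fun x : S => x * s))
          (X \ Set.range (fun x : S => x * s)) :=
        Set.disjoint_of_subset Set.inter_subset_right
          (Set.diff_subset_compl X _) disjoint_compl_right
      rw [← hadd _ _ hdis, Set.inter_union_diff]
    calc μ ((fun x : S => x * s) ⁻¹' X)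
        = μ ((fun x : S => x * s) '' ((fun x : S => x * s) ⁻¹' X)) := (hinv s _).symm
      _ = μ (X ∩ Set.range (fun x : S => x * s)) := by rw [himg]
      _ = μ X := by rw [e2, hdiff]; ring
  constructor
  · -- part (a)
    refine ⟨fun Y => μ (π ⁻¹' Y), fun Y => hrange _, by simp [huniv], ?_, ?_⟩
    · intro Y Z h
      show μ (π ⁻¹' (Y ∪ Z)) = μ (π ⁻¹' Y) + μ (π ⁻¹' Z)
      rw [Set.preimage_union]
      exact hadd _ _ (h.preimage π)
    · intro d Y
      obtain ⟨s₀, hs₀⟩ := hsurj d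
      have e : π ⁻¹' {c : C | c * d ∈ Y} = (fun x : S => x * s₀) ⁻¹' (π ⁻¹' Y) := by
        ext x; simp [← hs₀]
      show μ (π ⁻¹' {c : C | c * d ∈ Y}) = μ (π ⁻¹' Y)
      rw [e, hkey]
  · -- part (b)
    rintro ⟨σ, hσ1, hσ2⟩
    set N := MonoidHom.mker π with hN
    have hex : ∀ s : S, ∃ n : ↥N, σ (π s) * (n : S) = s := by
      intro s
      have h := (hσ2 (π s)).2
      have hs : s ∈ π ⁻¹' {π s} := rfl
      rw [← h] at hs
      obtain ⟨n, hn, he⟩ := hs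
      exact ⟨⟨n, hn⟩, he⟩
    choose f hf using hex
    have hπσ : ∀ (c : C) (n : ↥N), π (σ c * (n : S)) = c := by
      intro c n
      have hn : π (n : S) = 1 := n.2
      rw [map_mul, hn, mul_one, hσ1]
    have huniq : ∀ (c : C) (n : ↥N), f (σ c * (n : S)) = n := by
      intro c n
      have h1 := hf (σ c * (n : S))
      rw [hπσ c n] at h1
      exact Subtype.ext (mul_left_cancel h1)
    have hmul : ∀ (s : S) (n₀ : ↥N), f (s * (n₀ : S)) = f s * n₀ := by
      intro s n₀
      have hπ : π (s * (n₀ : S)) = π s := by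
        have hn : π (n₀ : S) = 1 := n₀.2
        rw [map_mul, hn, mul_one]
      have h1 := hf (s * (n₀ : S))
      rw [hπ] at h1
      have h2 : σ (π s) * ((f s * n₀ : ↥N) : S) = s * (n₀ : S) := by
        push_cast
        rw [← mul_assoc, hf s]
      exact Subtype.ext (mul_left_cancel (h1.trans h2.symm))
    have hset : ∀ (n₀ : ↥N) (X : Set ↥N),
        f ⁻¹' ((fun x => x * n₀) '' X) = (fun s : S => s * (n₀ : S)) '' (f ⁻¹' X) := by
      intro n₀ X
      ext s
      constructor
      · rintro ⟨x, hx, hfx⟩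
        refine ⟨σ (π s) * (x : S), ?_, ?_⟩
        · show f (σ (π s) * (x : S)) ∈ X
          rw [huniq]; exact hx
        · show σ (π s) * (x : S) * (n₀ : S) = s
          calc σ (π s) * (x : S) * (n₀ : S)
              = σ (π s) * ((x * n₀ : ↥N) : S) := by push_cast; rw [mul_assoc]
            _ = σ (π s) * ((f s : ↥N) : S) := by rw [show x * n₀ = f s from hfx]
            _ = s := hf s
      · rintro ⟨t, ht, rfl⟩
        exact ⟨f t, ht, (hmul t n₀).symm⟩
    refine ⟨fun X => μ (f ⁻¹' X), fun X => hrange _, by simp [huniv], ?_, ?_⟩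
    · intro X Y h
      show μ (f ⁻¹' (X ∪ Y)) = μ (f ⁻¹' X) + μ (f ⁻¹' Y)
      rw [Set.preimage_union]
      exact hadd _ _ (h.preimage f)
    · intro n₀ X
      show μ (f ⁻¹' ((fun x => x * n₀) '' X)) = μ (f ⁻¹' X)
      rw [hset, hinv]
end

section
/- Let S and C be cancellative monoids and π : S → C a surjective monoid homomorphism admitting a good section σ, with N = π⁻¹(1). If both N and C satisfy the right Følner condition, then S satisfies the right Følner condition (hence S is right amenable). -/
open Finset

theorem card_image_mul_sdiff_eq {M : Type*} [Mul M] [IsRightCancelMul M] [DecidableEq M]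
    (F : Finset M) (k : M) :
    #(F.image (· * k) \ F) = #{x ∈ F | x * k ∉ F} := by
  rw [sdiff_eq_filter, filter_image, card_image_of_injective _ (mul_left_injective k)]

theorem rightFolnerCond_iff_card_filter {M : Type*} [Mul M] [IsRightCancelMul M]
    [DecidableEq M] :
    RightFolnerCond M ↔ ∀ K : Finset M, K.Nonempty → ∀ ε : ℝ, 0 < ε →
      ∃ F : Finset M, F.Nonempty ∧ ∀ k ∈ K, (#{x ∈ F | x * k ∉ F} : ℝ) ≤ ε * #F := by
  simp only [RightFolnerCond, card_image_mul_sdiff_eq]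

theorem card_filter_image_notMem_of_injective {α β : Type*} [DecidableEq α] [DecidableEq β]
    (s : Finset α) {e : α → β} (he : Function.Injective e) {f : β → β} {T : α → α}
    (hT : ∀ a, f (e a) = e (T a)) :
    #{b ∈ s.image e | f b ∉ s.image e} = #{a ∈ s | T a ∉ s} := by
  rw [filter_image, card_image_of_injective _ he]
  simp only [hT, he.mem_finset_image]

theorem card_filter_prod_notMem_le {X Y : Type*} [DecidableEq X] [DecidableEq Y]
    (s : Finset X) (t : Finset Y) (u : Y → X → X) (v : Y → Y) :
    #{p ∈ s ×ˢ t | (u p.2 p.1, v p.2) ∉ s ×ˢ t} ≤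
      #s * #{y ∈ t | v y ∉ t} + ∑ y ∈ t, #{x ∈ s | u y x ∉ s} := by
  simp only [mem_product, not_and_or, filter_or]
  refine (card_union_le _ _).trans_eq ?_
  rw [add_comm, filter_product_right (v · ∉ t), card_product, card_filter (fun p => _ ∉ s),
    sum_product_right]
  simp only [card_filter]

theorem card_filter_prod_notMem_le_mul {X Y : Type*} [DecidableEq X] [DecidableEq Y]
    (s : Finset X) (t : Finset Y) (u : Y → X → X) (v : Y → Y) {δ δ' : ℝ}
    (hv : (#{y ∈ t | v y ∉ t} : ℝ) ≤ δ * #t)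
    (hu : ∀ y ∈ t, (#{x ∈ s | u y x ∉ s} : ℝ) ≤ δ' * #s) :
    (#{p ∈ s ×ˢ t | (u p.2 p.1, v p.2) ∉ s ×ˢ t} : ℝ) ≤ (δ + δ') * (#s * #t) := by
  calc (#{p ∈ s ×ˢ t | (u p.2 p.1, v p.2) ∉ s ×ˢ t} : ℝ)
      ≤ #s * #{y ∈ t | v y ∉ t} + ∑ y ∈ t, (#{x ∈ s | u y x ∉ s} : ℝ) := by
        exact_mod_cast card_filter_prod_notMem_le s t u v
    _ ≤ #s * (δ * #t) + ∑ _y ∈ t, δ' * #s := by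
        gcongr with y hy
        exact hu y hy
    _ = (δ + δ') * (#s * #t) := by
        rw [sum_const, nsmul_eq_mul]
        ring

namespace IsGoodSection

variable {S C : Type*} [Monoid S] [Monoid C] {π : S →* C} {σ : C → S}

theorem exists_mul_eq (hσ : IsGoodSection π σ) (c : C) (k : S) :
    ∃ a : MonoidHom.mker π, (a : S) * σ (c * π k) = σ c * k := by
  have hmem : σ c * k ∈ π ⁻¹' {c * π k} := by simp [hσ.1 c]
  rw [← ((hσ.2 (c * π k)).1)] at hmem
  obtain ⟨a, ha, hak⟩ := hmem
  exact ⟨⟨a, ha⟩, hak⟩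

theorem injective_mul [IsRightCancelMul S] (hσ : IsGoodSection π σ) :
    Function.Injective fun p : MonoidHom.mker π × C => (p.1 : S) * σ p.2 := by
  have hπ : ∀ p : MonoidHom.mker π × C, π (p.1 * σ p.2) = p.2 := fun p => by
    simp [MonoidHom.mem_mker.mp p.1.2, hσ.1]
  intro p q hpq
  simp only at hpq
  have hc : p.2 = q.2 := by rw [← hπ p, ← hπ q, hpq]
  rw [hc] at hpq
  exact Prod.ext (Subtype.ext (mul_right_cancel hpq)) hc

end IsGoodSection

theorem stmt13_general {S C : Type*} [CancelMonoid S] [CancelMonoid C]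
    [DecidableEq S] [DecidableEq C]
    (π : S →* C)
    (σ : C → S) (hσ : IsGoodSection π σ)
    (hN : RightFolnerCond ↥(MonoidHom.mker π)) (hC : RightFolnerCond C) :
    RightFolnerCond S := by
  rw [rightFolnerCond_iff_card_filter] at hN hC ⊢
  intro K hK ε hε
  obtain ⟨FC, hFC, hFCK⟩ := hC (K.image π) (hK.image π) (ε / 2) (half_pos hε)
  choose a ha using hσ.exists_mul_eq
  obtain ⟨FN, hFN, hFNa⟩ := hN ((FC ×ˢ K).image fun p => a p.1 p.2)
    ((hFC.product hK).image _) (ε / 2) (half_pos hε)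
  refine ⟨(FN ×ˢ FC).image fun p => (p.1 : S) * σ p.2, (hFN.product hFC).image _,
    fun k hk => ?_⟩
  rw [card_filter_image_notMem_of_injective _ hσ.injective_mul
      (T := fun p => (p.1 * a p.2 k, p.2 * π k)) fun p => by simp [mul_assoc, ha],
    card_image_of_injective _ hσ.injective_mul, card_product, Nat.cast_mul, ← add_halves ε]
  exact card_filter_prod_notMem_le_mul FN FC (fun c n => n * a c k) (· * π k)
    (hFCK _ (mem_image_of_mem π hk))
    fun c hc => hFNa _ (mem_image.mpr ⟨(c, k), mem_product.mpr ⟨hc, hk⟩, rfl⟩)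

/-- if `π : S → C` is a surjective homomorphism of cancellative monoids
admitting a good section, and both `N = π⁻¹(1)` and `C` satisfy the right Følner
condition, then so does `S`. -/
theorem stmt13 {S C : Type*} [CancelMonoid S] [CancelMonoid C]
    [DecidableEq S] [DecidableEq C]
    (π : S →* C) (hsurj : Function.Surjective π)
    (σ : C → S) (hσ : IsGoodSection π σ)
    (hN : RightFolnerCond ↥(MonoidHom.mker π)) (hC : RightFolnerCond C) :
    RightFolnerCond S :=
  stmt13_general π σ hσ hN hC
end

section
/- Let S be a semigroup, A an abelian group, α a left action of S on A by endomorphisms, and X ⊆ A a nonempty finite subset. Then each trajectory T_F(α,X) is finite, and the function f_X, defined on nonempty finite subsets F ⊆ S by f_X(F) = log |T_F(α,X)|, satisfies: (i) f_X is monotone: F ⊆ F' implies f_X(F) ≤ f_X(F'); (ii) f_X is subadditive: f_X(F₁ ∪ F₂) ≤ f_X(F₁) + f_X(F₂) for all nonempty finite F₁, F₂ ⊆ S; (iii) f_X is left subinvariant: f_X(s·F) ≤ f_X(F) for every s ∈ S, where s·F = {s·f : f ∈ F}; (iv) f_X({s}) ≤ log|X| for every s ∈ S. -/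
open Pointwise

/-- The trajectory `T_F(α, X) = ∑_{s ∈ F} α(s)(X)` (iterated pointwise sumset). -/
def trajSet {S A : Type*} [AddCommGroup A] (α : S → A →+ A) (F : Finset S) (X : Set A) :
    Set A :=
  ∑ s ∈ F, (⇑(α s) '' X)

section helpers

variable {S A : Type*} [AddCommGroup A]

lemma traj_finite (α : S → A →+ A) (F : Finset S) {X : Set A} (hX : X.Finite) :
    (trajSet α F X).Finite := by
  classical
  induction F using Finset.cons_induction with
  | empty => simp [trajSet, ← Set.singleton_zero]
  | cons a F h ih =>
      rw [trajSet, Finset.sum_cons]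
      exact (hX.image _).add ih

lemma traj_nonempty (α : S → A →+ A) (F : Finset S) {X : Set A} (hX : X.Nonempty) :
    (trajSet α F X).Nonempty := by
  classical
  induction F using Finset.cons_induction with
  | empty => simp [trajSet, ← Set.singleton_zero]
  | cons a F h ih =>
      rw [trajSet, Finset.sum_cons]
      exact (hX.image _).add ih

lemma card_le_card_add {U V : Set A} (hf : (U + V).Finite) (hV : V.Nonempty) :
    Nat.card U ≤ Nat.card (U + V) := by
  obtain ⟨v, hv⟩ := hV
  have h1 : (fun u => u + v) '' U ⊆ U + V := by
    rintro x ⟨u, hu, rfl⟩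
    exact Set.add_mem_add hu hv
  calc Nat.card U = Nat.card ((fun u => u + v) '' U) :=
        (Nat.card_image_of_injective (add_left_injective v) U).symm
    _ ≤ Nat.card (U + V) := Nat.card_mono hf h1

lemma traj_decomp [DecidableEq S] (α : S → A →+ A) {F F' : Finset S} (h : F ⊆ F') (X : Set A) :
    trajSet α F' X = trajSet α F X + trajSet α (F' \ F) X := by
  rw [trajSet, trajSet, trajSet, ← Finset.sum_union Finset.disjoint_sdiff,
    Finset.union_sdiff_of_subset h]

lemma card_traj_mono [DecidableEq S] (α : S → A →+ A) {F F' : Finset S} (h : F ⊆ F')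
    {X : Set A} (hX : X.Finite) (hXne : X.Nonempty) :
    Nat.card (trajSet α F X) ≤ Nat.card (trajSet α F' X) := by
  rw [traj_decomp α h X]
  exact card_le_card_add ((traj_decomp α h X) ▸ traj_finite α F' hX)
    (traj_nonempty α _ hXne)

lemma image_trajSum (m : A →+ A) (g : S → Set A) (F : Finset S) :
    ⇑m '' (∑ f ∈ F, g f) = ∑ f ∈ F, ⇑m '' g f := by
  classical
  induction F using Finset.cons_induction with
  | empty => simp [← Set.singleton_zero]
  | cons a F h ih => rw [Finset.sum_cons, Finset.sum_cons, Set.image_add, ih]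

end helpers

/-- the trajectories of a nonempty finite set are finite, and
`F ↦ log |T_F(α,X)|` is monotone, subadditive, left subinvariant, and bounded by
`log |X|` on singletons. -/
theorem stmt14 {S A : Type*} [Semigroup S] [DecidableEq S] [AddCommGroup A]
    (α : S → A →+ A) (hα : ∀ s t : S, α (s * t) = (α s).comp (α t))
    (X : Set A) (hXne : X.Nonempty) (hXfin : X.Finite) :
    (∀ F : Finset S, F.Nonempty → (trajSet α F X).Finite) ∧
    (∀ F F' : Finset S, F.Nonempty → F ⊆ F' →
      Real.log (Nat.card ↥(trajSet α F X)) ≤ Real.log (Nat.card ↥(trajSet α F' X))) ∧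
    (∀ F₁ F₂ : Finset S, F₁.Nonempty → F₂.Nonempty →
      Real.log (Nat.card ↥(trajSet α (F₁ ∪ F₂) X)) ≤
        Real.log (Nat.card ↥(trajSet α F₁ X)) + Real.log (Nat.card ↥(trajSet α F₂ X))) ∧
    (∀ (s : S) (F : Finset S), F.Nonempty →
      Real.log (Nat.card ↥(trajSet α (F.image (fun f => s * f)) X)) ≤
        Real.log (Nat.card ↥(trajSet α F X))) ∧
    (∀ s : S, Real.log (Nat.card ↥(trajSet α {s} X)) ≤ Real.log (Nat.card ↥X)) := by
  have hcardpos : ∀ F : Finset S, 0 < Nat.card (trajSet α F X) := fun F =>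
    (Set.natCard_pos (traj_finite α F hXfin)).mpr (traj_nonempty α F hXne)
  have logmono : ∀ {m n : ℕ}, 0 < m → m ≤ n → Real.log m ≤ Real.log n := by
    intro m n hm h
    exact Real.log_le_log (by exact_mod_cast hm) (by exact_mod_cast h)
  refine ⟨fun F _ => traj_finite α F hXfin, ?_, ?_, ?_, ?_⟩
  · intro F F' _ h
    exact logmono (hcardpos F) (card_traj_mono α h hXfin hXne)
  · -- subadditive
    intro F₁ F₂ _ _
    have hdec := traj_decomp α (Finset.subset_union_left : F₁ ⊆ F₁ ∪ F₂) X
    have h1 : Nat.card (trajSet α (F₁ ∪ F₂) X) ≤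
        Nat.card (trajSet α F₁ X) * Nat.card (trajSet α F₂ X) := by
      calc Nat.card (trajSet α (F₁ ∪ F₂) X)
          ≤ Nat.card (trajSet α F₁ X) * Nat.card (trajSet α ((F₁ ∪ F₂) \ F₁) X) := by
            rw [hdec]; exact Set.natCard_add_le
        _ ≤ Nat.card (trajSet α F₁ X) * Nat.card (trajSet α F₂ X) :=
            Nat.mul_le_mul_left _
              (card_traj_mono α (by intro x hx; have h := Finset.mem_sdiff.mp hx; simp at h; tauto) hXfin hXne)
    calc Real.log (Nat.card (trajSet α (F₁ ∪ F₂) X))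
        ≤ Real.log ((Nat.card (trajSet α F₁ X) : ℝ) * Nat.card (trajSet α F₂ X)) := by
          have := logmono (hcardpos (F₁ ∪ F₂)) h1
          rwa [Nat.cast_mul] at this
      _ = _ := Real.log_mul (by exact_mod_cast (hcardpos F₁).ne') (by exact_mod_cast (hcardpos F₂).ne')
  · -- left subinvariant
    intro s F _
    obtain ⟨t, hts, hbij⟩ := Set.exists_subset_bijOn (↑F : Set S) (fun f => s * f)
    have htfin : t.Finite := F.finite_toSet.subset hts
    classical
    set F' : Finset S := htfin.toFinset with hF'
    have hF'sub : F' ⊆ F := by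
      intro x hx
      exact hts (htfin.mem_toFinset.mp hx)
    have himg : F'.image (fun f => s * f) = F.image (fun f => s * f) := by
      apply Finset.coe_injective
      rw [Finset.coe_image, Finset.coe_image, htfin.coe_toFinset, hbij.image_eq]
    have hinj : Set.InjOn (fun f => s * f) (F' : Set S) := by
      rw [htfin.coe_toFinset]; exact hbij.injOn
    have hkey : trajSet α (F.image (fun f => s * f)) X = ⇑(α s) '' trajSet α F' X := by
      rw [← himg, trajSet, Finset.sum_image hinj, trajSet, image_trajSum]
      refine Finset.sum_congr rfl fun f _ => ?_
      rw [hα s f, AddMonoidHom.coe_comp, Set.image_comp]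
    have h1 : Nat.card (trajSet α (F.image (fun f => s * f)) X) ≤
        Nat.card (trajSet α F X) := by
      rw [hkey]
      exact (Nat.card_image_le (traj_finite α F' hXfin)).trans
        (card_traj_mono α hF'sub hXfin hXne)
    exact logmono (hcardpos _) h1
  · -- singleton bound
    intro s
    have h1 : trajSet α {s} X = ⇑(α s) '' X := by
      rw [trajSet, Finset.sum_singleton]
    have h2 : Nat.card (trajSet α {s} X) ≤ Nat.card X := by
      rw [h1]; exact Nat.card_image_le hXfin
    exact logmono (hcardpos _) h2
end

section
/- Let S be a semigroup, A an abelian group, α a left action of S on A by endomorphisms, F ⊆ S a nonempty finite subset, and X, X' ⊆ A nonempty finite subsets each containing 0. Then: (a) T_F(α, X + X') = T_F(α,X) + T_F(α,X'), where + denotes pointwise sumset; (b) T_F(α,X) ∪ T_F(α,X') ⊆ T_F(α, X ∪ X') ⊆ T_F(α,X) + T_F(α,X'). Consequently, for every integer m ≥ 1, T_F(α, X_m) = (T_F(α,X))_m, where Y_m denotes the m-fold sumset Y + Y + ⋯ + Y. -/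
open Pointwise

/-- The `m`-fold pointwise sumset `X_m = X + X + ⋯ + X` (`m` summands). -/
def itSum {A : Type*} [AddCommGroup A] (X : Set A) : ℕ → Set A
  | 0 => {0}
  | 1 => X
  | n + 2 => X + itSum X (n + 1)

lemma trajSet_add {S A : Type*} [AddCommGroup A] (α : S → A →+ A) (F : Finset S)
    (Y Z : Set A) : trajSet α F (Y + Z) = trajSet α F Y + trajSet α F Z := by
  unfold trajSet
  rw [← Finset.sum_add_distrib]
  exact Finset.sum_congr rfl fun s _ => Set.image_add (α s)

lemma trajSet_mono {S A : Type*} [AddCommGroup A] (α : S → A →+ A) (F : Finset S)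
    {Y Z : Set A} (h : Y ⊆ Z) : trajSet α F Y ⊆ trajSet α F Z := by
  unfold trajSet
  induction F using Finset.cons_induction with
  | empty => simp
  | cons a t ha ih =>
    rw [Finset.sum_cons, Finset.sum_cons]
    exact Set.add_subset_add (Set.image_mono h) ih

/-- trajectories commute with sumsets, are sandwiched for unions, and
`T_F(α, X_m) = (T_F(α,X))_m` for `m ≥ 1`. -/
theorem stmt15 {S A : Type*} [Semigroup S] [AddCommGroup A]
    (α : S → A →+ A) (hα : ∀ s t : S, α (s * t) = (α s).comp (α t))
    (F : Finset S) (hF : F.Nonempty)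
    (X X' : Set A) (hXne : X.Nonempty) (hXfin : X.Finite) (hX0 : (0 : A) ∈ X)
    (hX'ne : X'.Nonempty) (hX'fin : X'.Finite) (hX'0 : (0 : A) ∈ X') :
    trajSet α F (X + X') = trajSet α F X + trajSet α F X' ∧
    trajSet α F X ∪ trajSet α F X' ⊆ trajSet α F (X ∪ X') ∧
    trajSet α F (X ∪ X') ⊆ trajSet α F X + trajSet α F X' ∧
    (∀ m : ℕ, 1 ≤ m → trajSet α F (itSum X m) = itSum (trajSet α F X) m) := by
  refine ⟨trajSet_add α F X X', ?_, ?_, ?_⟩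
  · exact Set.union_subset (trajSet_mono α F Set.subset_union_left)
      (trajSet_mono α F Set.subset_union_right)
  · have h : X ∪ X' ⊆ X + X' := by
      rintro x (hx | hx)
      · exact ⟨x, hx, 0, hX'0, by simp⟩
      · exact ⟨0, hX0, x, hx, by simp⟩
    exact (trajSet_mono α F h).trans (trajSet_add α F X X').le
  · intro m hm
    induction m with
    | zero => omega
    | succ n ih =>
      match n, ih with
      | 0, _ => rfl
      | n + 1, ih =>
        show trajSet α F (X + itSum X (n + 1)) = trajSet α F X + itSum (trajSet α F X) (n + 1)
        rw [trajSet_add, ih (by omega)]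
end

section
/- Let S be a semigroup, A an abelian group, and α a left action of S on A by endomorphisms. Let n ≥ 1, let F_1, …, F_n ⊆ S be nonempty finite subsets, let C_1, …, C_n be finite subgroups of A, and let B_1, …, B_n be subgroups of A. Then T_{F_i}(α,B_i) is a subgroup of A for each i, the sum B = T_{F_1}(α,B_1) + ⋯ + T_{F_n}(α,B_n) is a subgroup of A, and the image of T_{F_1}(α,C_1) + ⋯ + T_{F_n}(α,C_n) under the canonical projection A → A/B is finite with ℓ(T_{F_1}(α,C_1) + ⋯ + T_{F_n}(α,C_n), B) ≤ ∑_{i=1}^n |F_i| · ℓ(C_i, B_i). -/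
open Pointwise

section PointwiseSum

variable {ι A : Type*} [AddCommGroup A]

theorem Set.Finite.finsetSum (I : Finset ι) {X : ι → Set A} (hX : ∀ i ∈ I, (X i).Finite) :
    (∑ i ∈ I, X i).Finite :=
  Finset.sum_induction X Set.Finite (fun _ _ => Set.Finite.add) Set.finite_zero hX

theorem Set.natCard_finsetSum_le (I : Finset ι) (X : ι → Set A) :
    Nat.card ↥(∑ i ∈ I, X i) ≤ ∏ i ∈ I, Nat.card ↥(X i) := by
  classical
  induction I using Finset.induction with
  | empty => simp
  | insert a I ha ih =>
    rw [Finset.sum_insert ha, Finset.prod_insert ha]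
    exact Set.natCard_add_le.trans (Nat.mul_le_mul_left _ ih)

theorem AddSubgroup.coe_finsetSum (I : Finset ι) (H : ι → AddSubgroup A) :
    ∑ i ∈ I, (H i : Set A) = ((⨆ i ∈ I, H i : AddSubgroup A) : Set A) := by
  classical
  induction I using Finset.induction with
  | empty => simp [← Set.singleton_zero]
  | insert a I ha ih =>
    rw [Finset.sum_insert ha, ih, Finset.iSup_insert, AddSubgroup.add_normal]

end PointwiseSum

section QuotientImage

variable {A A' : Type*} [AddCommGroup A] [AddCommGroup A']

theorem natCard_image_mk_image_le (f : A →+ A') {B : AddSubgroup A} {D : AddSubgroup A'}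
    (hBD : B.map f ≤ D) {X : Set A} (hX : (QuotientAddGroup.mk' B '' X).Finite) :
    Nat.card ↥(QuotientAddGroup.mk' D '' (f '' X)) ≤ Nat.card ↥(QuotientAddGroup.mk' B '' X) := by
  let g := QuotientAddGroup.map B D f (AddSubgroup.map_le_iff_le_comap.mp hBD)
  have hcomm : QuotientAddGroup.mk' D '' (f '' X) = g '' (QuotientAddGroup.mk' B '' X) := by
    rw [Set.image_image, Set.image_image]
    rfl
  rw [hcomm]
  exact Nat.card_image_le hX

end QuotientImage

section Trajectory

variable {ι S A : Type*} [AddCommGroup A] (α : S → A →+ A)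

theorem coe_trajSet_addSubgroup (F : Finset S) (B : AddSubgroup A) :
    trajSet α F (B : Set A) = ((⨆ s ∈ F, B.map (α s) : AddSubgroup A) : Set A) := by
  simp only [trajSet, ← AddSubgroup.coe_map, AddSubgroup.coe_finsetSum]

theorem coe_sum_trajSet_addSubgroup (I : Finset ι) (F : ι → Finset S) (B : ι → AddSubgroup A) :
    ∑ i ∈ I, trajSet α (F i) (B i : Set A)
      = ((⨆ i ∈ I, ⨆ s ∈ F i, (B i).map (α s) : AddSubgroup A) : Set A) := by
  simp only [coe_trajSet_addSubgroup, AddSubgroup.coe_finsetSum]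

theorem finite_trajSet (F : Finset S) {X : Set A} (hX : X.Finite) : (trajSet α F X).Finite :=
  Set.Finite.finsetSum F fun _ _ => hX.image _

theorem natCard_image_mk_trajSet_le (F : Finset S) {B D : AddSubgroup A}
    (hBD : ∀ s ∈ F, B.map (α s) ≤ D) {X : Set A} (hX : (QuotientAddGroup.mk' B '' X).Finite) :
    Nat.card ↥(QuotientAddGroup.mk' D '' trajSet α F X)
      ≤ Nat.card ↥(QuotientAddGroup.mk' B '' X) ^ F.card := by
  rw [trajSet, Set.image_finsetSum, ← Finset.prod_const]
  exact (Set.natCard_finsetSum_le _ _).trans <|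
    Finset.prod_le_prod' fun s hs => natCard_image_mk_image_le (α s) (hBD s hs) hX

theorem natCard_image_mk_sum_trajSet_le (I : Finset ι) (F : ι → Finset S)
    (B : ι → AddSubgroup A) (D : AddSubgroup A) (hBD : ∀ i ∈ I, ∀ s ∈ F i, (B i).map (α s) ≤ D)
    (X : ι → Set A) (hX : ∀ i ∈ I, (QuotientAddGroup.mk' (B i) '' X i).Finite) :
    Nat.card ↥(QuotientAddGroup.mk' D '' ∑ i ∈ I, trajSet α (F i) (X i))
      ≤ ∏ i ∈ I, Nat.card ↥(QuotientAddGroup.mk' (B i) '' X i) ^ (F i).card := by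
  rw [Set.image_finsetSum]
  exact (Set.natCard_finsetSum_le _ _).trans <|
    Finset.prod_le_prod' fun i hi => natCard_image_mk_trajSet_le α _ (hBD i hi) (hX i hi)

end Trajectory

theorem Real.log_le_sum_mul_log_of_le_prod_pow {ι : Type*} {I : Finset ι} {N : ℕ} (hN : 0 < N)
    {m k : ι → ℕ} (h : N ≤ ∏ i ∈ I, m i ^ k i) :
    Real.log N ≤ ∑ i ∈ I, (k i : ℝ) * Real.log (m i) := by
  have hm : ∀ i ∈ I, (m i : ℝ) ^ k i ≠ 0 := by
    have := Finset.prod_ne_zero_iff.mp (lt_of_lt_of_le hN h).ne'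
    exact fun i hi => by exact_mod_cast this i hi
  calc Real.log N ≤ Real.log (∏ i ∈ I, (m i : ℝ) ^ k i) :=
        Real.log_le_log (by exact_mod_cast hN) (by exact_mod_cast h)
    _ = ∑ i ∈ I, (k i : ℝ) * Real.log (m i) := by
        rw [Real.log_prod hm]
        simp only [Real.log_pow]

theorem stmt17_general {S A : Type*} [AddCommGroup A]
    (α : S → A →+ A)
    (n : ℕ)
    (F : Fin n → Finset S)
    (C : Fin n → AddSubgroup A) (hC : ∀ i, (C i : Set A).Finite)
    (B : Fin n → AddSubgroup A)
    (Bsup : AddSubgroup A) (hBsup : Bsup = ⨆ i, ⨆ s ∈ F i, (B i).map (α s)) :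
    (∀ i, trajSet α (F i) ((B i : Set A))
        = ((⨆ s ∈ F i, (B i).map (α s) : AddSubgroup A) : Set A)) ∧
    ((∑ i, trajSet α (F i) ((B i : Set A))) = (Bsup : Set A)) ∧
    (⇑(QuotientAddGroup.mk' Bsup) '' (∑ i, trajSet α (F i) ((C i : Set A)))).Finite ∧
    Real.log (Nat.card
        ↥(⇑(QuotientAddGroup.mk' Bsup) '' (∑ i, trajSet α (F i) ((C i : Set A))))) ≤
      ∑ i, ((F i).card : ℝ) *
        Real.log (Nat.card ↥(⇑(QuotientAddGroup.mk' (B i)) '' ((C i : Set A)))) := by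
  set Y := ∑ i, trajSet α (F i) (C i : Set A)
  have hY : (QuotientAddGroup.mk' Bsup '' Y).Finite :=
    (Set.Finite.finsetSum _ fun i _ => finite_trajSet α _ (hC i)).image _
  have hzero : (0 : A) ∈ Y := by
    simp only [Y, coe_sum_trajSet_addSubgroup, SetLike.mem_coe]
    exact AddSubgroup.zero_mem _
  have hBle : ∀ i ∈ Finset.univ, ∀ s ∈ F i, (B i).map (α s) ≤ Bsup := fun i _ s hs =>
    hBsup ▸ le_iSup_of_le i (le_iSup₂_of_le s hs le_rfl)
  refine ⟨fun i => coe_trajSet_addSubgroup α _ _, ?_, hY, ?_⟩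
  · simp [coe_sum_trajSet_addSubgroup, hBsup]
  · exact Real.log_le_sum_mul_log_of_le_prod_pow
      ((Set.natCard_pos hY).mpr ⟨_, Set.mem_image_of_mem _ hzero⟩)
      (natCard_image_mk_sum_trajSet_le α _ F B Bsup hBle (fun i => C i) fun i _ => (hC i).image _)

/-- each `T_{F_i}(α,B_i)` is a subgroup, their sum is the subgroup
`Bsup = ⨆_i ⨆_{s ∈ F_i} (B_i).map (α s)`, and the image of
`T_{F_1}(α,C_1) + ⋯ + T_{F_n}(α,C_n)` in `A ⧸ Bsup` is finite with
`ℓ(∑ T_{F_i}(α,C_i), Bsup) ≤ ∑ |F_i| · ℓ(C_i, B_i)`. -/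
theorem stmt17 {S A : Type*} [Semigroup S] [AddCommGroup A]
    (α : S → A →+ A) (hα : ∀ s t : S, α (s * t) = (α s).comp (α t))
    (n : ℕ) (hn : 1 ≤ n)
    (F : Fin n → Finset S) (hF : ∀ i, (F i).Nonempty)
    (C : Fin n → AddSubgroup A) (hC : ∀ i, (C i : Set A).Finite)
    (B : Fin n → AddSubgroup A)
    (Bsup : AddSubgroup A) (hBsup : Bsup = ⨆ i, ⨆ s ∈ F i, (B i).map (α s)) :
    (∀ i, trajSet α (F i) ((B i : Set A))
        = ((⨆ s ∈ F i, (B i).map (α s) : AddSubgroup A) : Set A)) ∧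
    ((∑ i, trajSet α (F i) ((B i : Set A))) = (Bsup : Set A)) ∧
    (⇑(QuotientAddGroup.mk' Bsup) '' (∑ i, trajSet α (F i) ((C i : Set A)))).Finite ∧
    Real.log (Nat.card
        ↥(⇑(QuotientAddGroup.mk' Bsup) '' (∑ i, trajSet α (F i) ((C i : Set A))))) ≤
      ∑ i, ((F i).card : ℝ) *
        Real.log (Nat.card ↥(⇑(QuotientAddGroup.mk' (B i)) '' ((C i : Set A)))) :=
  stmt17_general α n F C hC B Bsup hBsup
end

section
/- Let S be a monoid satisfying the left Ore condition (for instance, a cancellative right amenable monoid), A an abelian group, and α a left monoid action of S on A by endomorphisms (so α(1) = id_A and α(s·t) = α(s)∘α(t)). Let B ⊆ A be a subset generating A as a group, and suppose α is weakly locally nilpotent: for every b ∈ B there exists s ∈ S with α(s)(b) = 0. Then α is locally nilpotent: for every a ∈ A there exists t ∈ S with α(t)(a) = 0. -/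
/-- for a left monoid action of a monoid satisfying the left Ore
condition on an abelian group, weak local nilpotency (on a generating set) implies
local nilpotency. -/
theorem stmt18 {S A : Type*} [Monoid S] [AddCommGroup A]
    (hOre : ∀ a b : S, ∃ f g : S, f * a = g * b)
    (α : S → A →+ A) (hα : ∀ s t : S, α (s * t) = (α s).comp (α t))
    (hone : α 1 = AddMonoidHom.id A)
    (B : Set A) (hgen : AddSubgroup.closure B = ⊤)
    (hwln : ∀ b ∈ B, ∃ s : S, α s b = 0) :
    ∀ a : A, ∃ t : S, α t a = 0 := by
  set K : AddSubgroup A :=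
    { carrier := {a | ∃ t : S, α t a = 0}
      zero_mem' := ⟨1, by simp⟩
      add_mem' := by
        rintro a b ⟨t, ht⟩ ⟨u, hu⟩
        obtain ⟨f, g, hfg⟩ := hOre t u
        refine ⟨f * t, ?_⟩
        have h1 : α (f * t) a = 0 := by
          rw [hα, AddMonoidHom.comp_apply, ht, map_zero]
        have h2 : α (f * t) b = 0 := by
          rw [hfg, hα, AddMonoidHom.comp_apply, hu, map_zero]
        rw [map_add, h1, h2, add_zero]
      neg_mem' := by
        rintro a ⟨t, ht⟩
        exact ⟨t, by simp [ht]⟩ } with hK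
  intro a
  have hle : AddSubgroup.closure B ≤ K := (AddSubgroup.closure_le K).mpr hwln
  exact hle (by rw [hgen]; trivial)
end
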